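/- arXiv:1704.07247 — 4 statements merged into one kernel-verified Lean document; each statement's English description precedes it below -/
import Mathlib

section
/- Let 0 < α, β ≤ 1 with 1 < α + β ≤ 2, a < b, and let G(t,r) = (1/(Γ(α)Γ(β))) ∫_a^{min(t,r)} (t-s)^{β-1}(r-s)^{α-1} ds. Then for every fixed r ∈ [a,b], max over t ∈ [a,b] of G(t,r) equals G(r,r) = (r-a)^{α+β-1} / ((α+β-1) Γ(α) Γ(β)). -/
open Real MeasureTheory Set

noncomputable def G (a α β t r : ℝ) : ℝ :=
  (1 / (Real.Gamma α * Real.Gamma β)) *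
    ∫ s in a..(min t r), (t - s) ^ (β - 1) * (r - s) ^ (α - 1)

/-
Both exponents `β - 1` and `α - 1` are nonpositive, so for `s < m := min t r` the kernel is
bounded by `(m - s) ^ (α + β - 2)`, with equality when `t = r`. Integrating gives
`G t r ≤ (m - a) ^ (α + β - 1) / ((α + β - 1) Γ(α) Γ(β)) = G m m`, and `G m m ≤ G r r` because
`α + β - 1 > 0`.
-/

lemma intervalIntegral.integral_mono_on_Ioo_of_nonneg {f g : ℝ → ℝ} {a b : ℝ} (hab : a ≤ b)
    (hg : IntervalIntegrable g volume a b) (hf : ∀ x ∈ Ioo a b, 0 ≤ f x)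
    (hfg : ∀ x ∈ Ioo a b, f x ≤ g x) :
    ∫ x in a..b, f x ≤ ∫ x in a..b, g x := by
  simp only [intervalIntegral.integral_of_le hab, integral_Ioc_eq_integral_Ioo]
  exact integral_mono_of_nonneg (ae_restrict_of_forall_mem measurableSet_Ioo hf)
    (hg.1.mono_set Ioo_subset_Ioc_self) (ae_restrict_of_forall_mem measurableSet_Ioo hfg)

lemma integral_sub_rpow {γ : ℝ} (hγ : -1 < γ) (a m : ℝ) :
    ∫ s in a..m, (m - s) ^ γ = (m - a) ^ (γ + 1) / (γ + 1) := by
  rw [intervalIntegral.integral_comp_sub_left (fun u => u ^ γ), sub_self,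
    integral_rpow (Or.inl hγ), zero_rpow (by linarith), sub_zero]

lemma intervalIntegrable_sub_rpow {γ : ℝ} (hγ : -1 < γ) (a m : ℝ) :
    IntervalIntegrable (fun s => (m - s) ^ γ) volume a m := by
  simpa using ((intervalIntegral.intervalIntegrable_rpow' (a := 0) (b := m - a) hγ).comp_sub_left
    m).symm

lemma kernel_le {α β s m t r : ℝ} (hα1 : α ≤ 1) (hβ1 : β ≤ 1) (hsm : s < m) (hmt : m ≤ t)
    (hmr : m ≤ r) :
    (t - s) ^ (β - 1) * (r - s) ^ (α - 1) ≤ (m - s) ^ (α + β - 2) := by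
  have hpos : 0 < m - s := by linarith
  calc (t - s) ^ (β - 1) * (r - s) ^ (α - 1)
      ≤ (m - s) ^ (β - 1) * (m - s) ^ (α - 1) :=
        mul_le_mul (rpow_le_rpow_of_nonpos hpos (by linarith) (by linarith))
          (rpow_le_rpow_of_nonpos hpos (by linarith) (by linarith))
          (rpow_nonneg (by linarith) _) (rpow_nonneg hpos.le _)
    _ = (m - s) ^ (α + β - 2) := by rw [← rpow_add hpos]; ring_nf

lemma G_self {a α β r : ℝ} (hs1 : 1 < α + β) (har : a ≤ r) :
    G a α β r r = (r - a) ^ (α + β - 1) / ((α + β - 1) * Real.Gamma α * Real.Gamma β) := by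
  have hkernel : EqOn (fun s => (r - s) ^ (β - 1) * (r - s) ^ (α - 1))
      (fun s => (r - s) ^ (α + β - 2)) (Ioo a r) := fun s hs => by
    simp only
    rw [← rpow_add (sub_pos.2 hs.2)]; ring_nf
  rw [G, min_self, intervalIntegral.integral_congr_Ioo_of_le har hkernel,
    integral_sub_rpow (by linarith), show α + β - 2 + 1 = α + β - 1 by ring]
  field_simp

lemma integral_kernel_le {a α β t r : ℝ} (hα1 : α ≤ 1) (hβ1 : β ≤ 1) (hs1 : 1 < α + β)
    (hat : a ≤ t) (har : a ≤ r) :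
    ∫ s in a..(min t r), (t - s) ^ (β - 1) * (r - s) ^ (α - 1)
      ≤ (r - a) ^ (α + β - 1) / (α + β - 1) := by
  set m := min t r
  have ham : a ≤ m := le_min hat har
  have hmt : m ≤ t := min_le_left t r
  have hmr : m ≤ r := min_le_right t r
  have hγ : -1 < α + β - 2 := by linarith
  calc ∫ s in a..m, (t - s) ^ (β - 1) * (r - s) ^ (α - 1)
      ≤ ∫ s in a..m, (m - s) ^ (α + β - 2) :=
        intervalIntegral.integral_mono_on_Ioo_of_nonneg ham (intervalIntegrable_sub_rpow hγ a m)
          (fun s hs => mul_nonneg (rpow_nonneg (by linarith [hs.2]) _)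
            (rpow_nonneg (by linarith [hs.2]) _))
          (fun s hs => kernel_le hα1 hβ1 hs.2 hmt hmr)
    _ = (m - a) ^ (α + β - 1) / (α + β - 1) := by
        rw [integral_sub_rpow hγ, show α + β - 2 + 1 = α + β - 1 by ring]
    _ ≤ (r - a) ^ (α + β - 1) / (α + β - 1) := by gcongr

theorem stmt_1_general (a b α β : ℝ) (hα0 : 0 < α) (hα1 : α ≤ 1) (hβ0 : 0 < β) (hβ1 : β ≤ 1)
    (hs1 : 1 < α + β) (r : ℝ) (hr : r ∈ Icc a b) :
    IsMaxOn (fun t => G a α β t r) (Icc a b) r ∧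
      G a α β r r = (r - a) ^ (α + β - 1) / ((α + β - 1) * Real.Gamma α * Real.Gamma β) := by
  refine ⟨fun t ht => ?_, G_self hs1 hr.1⟩
  calc G a α β t r
      ≤ (1 / (Real.Gamma α * Real.Gamma β)) * ((r - a) ^ (α + β - 1) / (α + β - 1)) :=
        mul_le_mul_of_nonneg_left (integral_kernel_le hα1 hβ1 hs1 ht.1 hr.1) (by positivity)
    _ = G a α β r r := by rw [G_self hs1 hr.1]; field_simp

theorem stmt_1 (a b α β : ℝ) (hα0 : 0 < α) (hα1 : α ≤ 1) (hβ0 : 0 < β) (hβ1 : β ≤ 1)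
    (hs1 : 1 < α + β) (hs2 : α + β ≤ 2) (hab : a < b) (r : ℝ) (hr : r ∈ Icc a b) :
    IsMaxOn (fun t => G a α β t r) (Icc a b) r ∧
      G a α β r r = (r - a) ^ (α + β - 1) / ((α + β - 1) * Real.Gamma α * Real.Gamma β) :=
  stmt_1_general a b α β hα0 hα1 hβ0 hβ1 hs1 r hr
end

section
/- Let a < b and let u : [a,b] → ℝ be a nontrivial continuous solution of the integral equation u(t) = ∫_a^b G(t,r) q(r) u(r) dr, where for α = β = 1 the Green function is G(t,r) = min(t,r) - a (i.e., the Green function of u'' + q u = 0 with u(a) = 0 = u'(b)). Then ∫_a^b |q(r)| dr ≥ 1/(b-a). -/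
/-! Let `M > 0` be the maximum of `|u|` on `[a, b]`, attained at `t₀`. Since `0 ≤ min t r - a ≤ b - a`,
the integral equation at `t₀` gives `M ≤ (b - a) * M * ∫ |q|`; dividing by `M` yields the bound. -/

open Real MeasureTheory Set

theorem abs_min_sub_le_sub {a b t r : ℝ} (ht : t ∈ Icc a b) (hr : r ∈ Icc a b) :
    |min t r - a| ≤ b - a := by
  rw [abs_of_nonneg (sub_nonneg.2 (le_min ht.1 hr.1))]
  linarith [min_le_left t r, ht.2]

theorem one_le_mul_integral_abs_of_eq_integral_kernel {a b C : ℝ} {K : ℝ → ℝ → ℝ} {q u : ℝ → ℝ}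
    (hKC : ∀ t ∈ Icc a b, ∀ r ∈ Icc a b, |K t r| ≤ C)
    (hq : ContinuousOn q (Icc a b)) (hu : ContinuousOn u (Icc a b))
    (hne : ∃ t ∈ Icc a b, u t ≠ 0)
    (heq : ∀ t ∈ Icc a b, u t = ∫ r in a..b, K t r * q r * u r) :
    1 ≤ C * ∫ r in a..b, |q r| := by
  obtain ⟨t₁, ht₁, hut₁⟩ := hne
  have hab : a ≤ b := ht₁.1.trans ht₁.2
  obtain ⟨t₀, ht₀, hmax⟩ := isCompact_Icc.exists_isMaxOn ⟨t₁, ht₁⟩ hu.abs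
  have hM : 0 < |u t₀| := (abs_pos.2 hut₁).trans_le (hmax ht₁)
  have hqi : IntervalIntegrable (fun r => |q r|) volume a b :=
    (hq.abs.mono (uIcc_of_le hab).subset).intervalIntegrable
  have hbound : ∀ r ∈ Icc a b, ‖K t₀ r * q r * u r‖ ≤ C * |u t₀| * |q r| := by
    intro r hr
    have hC : 0 ≤ C := (abs_nonneg _).trans (hKC t₀ ht₀ r hr)
    calc ‖K t₀ r * q r * u r‖ = |K t₀ r| * |q r| * |u r| := by
          rw [Real.norm_eq_abs, abs_mul, abs_mul]
      _ ≤ C * |q r| * |u t₀| :=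
        mul_le_mul (mul_le_mul_of_nonneg_right (hKC t₀ ht₀ r hr) (abs_nonneg _)) (hmax hr)
          (abs_nonneg _) (mul_nonneg hC (abs_nonneg _))
      _ = C * |u t₀| * |q r| := by ring
  have key : |u t₀| * 1 ≤ |u t₀| * (C * ∫ r in a..b, |q r|) :=
    calc |u t₀| * 1 = ‖∫ r in a..b, K t₀ r * q r * u r‖ := by
          rw [mul_one, ← heq t₀ ht₀, Real.norm_eq_abs]
      _ ≤ ∫ r in a..b, C * |u t₀| * |q r| :=
        intervalIntegral.norm_integral_le_of_norm_le hab
          (.of_forall fun r hr => hbound r (Ioc_subset_Icc_self hr)) (hqi.const_mul _)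
      _ = |u t₀| * (C * ∫ r in a..b, |q r|) := by
        rw [intervalIntegral.integral_const_mul]; ring
  exact le_of_mul_le_mul_left key hM

theorem stmt_7_general (a b : ℝ) (q u : ℝ → ℝ)
    (hq : ContinuousOn q (Icc a b)) (hu : ContinuousOn u (Icc a b))
    (hne : ∃ t ∈ Icc a b, u t ≠ 0)
    (heq : ∀ t ∈ Icc a b, u t = ∫ r in a..b, (min t r - a) * q r * u r) :
    1 / (b - a) ≤ ∫ r in a..b, |q r| := by
  have h := one_le_mul_integral_abs_of_eq_integral_kernel
    (fun t ht r hr => abs_min_sub_le_sub ht hr) hq hu hne heq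
  obtain ⟨t, ht, -⟩ := hne
  have hab : 0 < b - a := by
    rcases (sub_nonneg.2 (ht.1.trans ht.2)).eq_or_lt with h0 | h0
    · rw [← h0, zero_mul] at h; linarith
    · exact h0
  rwa [div_le_iff₀ hab, mul_comm]

theorem stmt_7 (a b : ℝ) (hab : a < b) (q u : ℝ → ℝ)
    (hq : ContinuousOn q (Icc a b)) (hu : ContinuousOn u (Icc a b))
    (hne : ∃ t ∈ Icc a b, u t ≠ 0)
    (heq : ∀ t ∈ Icc a b, u t = ∫ r in a..b, (min t r - a) * q r * u r) :
    1 / (b - a) ≤ ∫ r in a..b, |q r| :=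
  stmt_7_general a b q u hq hu hne heq
end

section
/- Let 0 < α, β ≤ 1 with 1 < α + β ≤ 2, a < b, λ ∈ ℝ, and suppose there exists a continuous, not identically zero function u : [a,b] → ℝ satisfying u(t) = λ ∫_a^b G(t,r) u(r) dr for all t ∈ [a,b], where G(t,r) = (1/(Γ(α)Γ(β))) ∫_a^{min(t,r)} (t-s)^{β-1}(r-s)^{α-1} ds. Then |λ| ≥ (α+β-1)Γ(α)Γ(β)/(b-a)^{α+β}. -/
open Real MeasureTheory Set

/-!
Evaluating the integral equation at a maximum point `t₀` of `|u|` gives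
`|u t₀| ≤ |λ| (b - a) sup |G| |u t₀|`, so `1 ≤ |λ| (b - a) sup |G|`. Since both exponents
`α - 1, β - 1` are nonpositive, the integrand of `G t r` is dominated by
`(min t r - s) ^ (α + β - 2)`, which is integrable because `α + β > 1`; this gives
`0 ≤ G ≤ (b - a) ^ (α + β - 1) / ((α + β - 1) Γ(α) Γ(β))` on the square.
-/

theorem one_le_abs_mul_of_eq_mul_integral {K : ℝ → ℝ → ℝ} {u : ℝ → ℝ} {a b C lam : ℝ}
    (hab : a ≤ b) (hK : ∀ t ∈ Icc a b, ∀ r ∈ Icc a b, |K t r| ≤ C)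
    (hu : ContinuousOn u (Icc a b)) (hne : ∃ t ∈ Icc a b, u t ≠ 0)
    (heq : ∀ t ∈ Icc a b, u t = lam * ∫ r in a..b, K t r * u r) :
    1 ≤ |lam| * (C * (b - a)) := by
  obtain ⟨t₀, ht₀, hmax⟩ := isCompact_Icc.exists_isMaxOn (nonempty_Icc.2 hab) hu.abs
  obtain ⟨t₁, ht₁, hu₁⟩ := hne
  have hM : 0 < |u t₀| := (abs_pos.2 hu₁).trans_le (hmax ht₁)
  have hC : 0 ≤ C := (abs_nonneg _).trans (hK t₀ ht₀ t₀ ht₀)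
  have hbound : ∀ r ∈ uIoc a b, ‖K t₀ r * u r‖ ≤ C * |u t₀| := by
    intro r hr
    have hr : r ∈ Icc a b := Ioc_subset_Icc_self (uIoc_of_le hab ▸ hr)
    rw [norm_mul, norm_eq_abs, norm_eq_abs]
    exact mul_le_mul (hK t₀ ht₀ r hr) (hmax hr) (abs_nonneg _) hC
  have hint := intervalIntegral.norm_integral_le_of_norm_le_const hbound
  rw [norm_eq_abs, abs_of_nonneg (sub_nonneg.2 hab)] at hint
  have : 1 * |u t₀| ≤ |lam| * (C * (b - a)) * |u t₀| :=
    calc 1 * |u t₀| = |lam| * |∫ r in a..b, K t₀ r * u r| := by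
          rw [one_mul, heq t₀ ht₀, abs_mul]
      _ ≤ |lam| * (C * |u t₀| * (b - a)) := by gcongr
      _ = |lam| * (C * (b - a)) * |u t₀| := by ring
  exact le_of_mul_le_mul_right this hM

theorem integral_sub_rpow_sub_one {a m γ : ℝ} (hγ : 0 < γ) :
    ∫ s in a..m, (m - s) ^ (γ - 1) = (m - a) ^ γ / γ := by
  rw [intervalIntegral.integral_comp_sub_left (fun x => x ^ (γ - 1)) m, sub_self,
    integral_rpow (Or.inl (by linarith)), sub_add_cancel, zero_rpow hγ.ne', sub_zero]

theorem intervalIntegrable_sub_rpow_sub_one {a m γ : ℝ} (hγ : 0 < γ) :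
    IntervalIntegrable (fun s => (m - s) ^ (γ - 1)) volume a m := by
  simpa using ((intervalIntegral.intervalIntegrable_rpow' (r := γ - 1) (by linarith)
    (a := 0) (b := m - a)).comp_sub_left m).symm

theorem rpow_mul_rpow_le_rpow_of_le {s m t r α β : ℝ} (hα : α ≤ 1) (hβ : β ≤ 1) (hs : s < m)
    (hmt : m ≤ t) (hmr : m ≤ r) :
    (t - s) ^ (β - 1) * (r - s) ^ (α - 1) ≤ (m - s) ^ (α + β - 2) := by
  have hms : 0 < m - s := sub_pos.2 hs
  calc (t - s) ^ (β - 1) * (r - s) ^ (α - 1) ≤ (m - s) ^ (β - 1) * (m - s) ^ (α - 1) :=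
        mul_le_mul (rpow_le_rpow_of_nonpos hms (by linarith) (by linarith))
          (rpow_le_rpow_of_nonpos hms (by linarith) (by linarith))
          (rpow_nonneg (by linarith) _) (rpow_nonneg hms.le _)
    _ = (m - s) ^ (α + β - 2) := by rw [← rpow_add hms]; ring_nf

theorem integral_rpow_mul_rpow_le {a t r α β : ℝ} (hα : α ≤ 1) (hβ : β ≤ 1) (hαβ : 1 < α + β)
    (ht : a ≤ t) (hr : a ≤ r) :
    ∫ s in a..min t r, (t - s) ^ (β - 1) * (r - s) ^ (α - 1) ≤
      (min t r - a) ^ (α + β - 1) / (α + β - 1) := by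
  set m := min t r
  have ham : a ≤ m := le_min ht hr
  have hγ : 0 < α + β - 1 := by linarith
  have hexp : α + β - 1 - 1 = α + β - 2 := by ring
  have hdom := intervalIntegrable_sub_rpow_sub_one (a := a) (m := m) hγ
  rw [hexp] at hdom
  rw [← integral_sub_rpow_sub_one hγ, hexp]
  by_cases hfi : IntervalIntegrable (fun s => (t - s) ^ (β - 1) * (r - s) ^ (α - 1)) volume a m
  · exact intervalIntegral.integral_mono_on_of_le_Ioo ham hfi hdom fun s hs =>
      rpow_mul_rpow_le_rpow_of_le hα hβ hs.2 (min_le_left t r) (min_le_right t r)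
  · rw [intervalIntegral.integral_undef hfi]
    exact intervalIntegral.integral_nonneg ham fun s hs => rpow_nonneg (by linarith [hs.2]) _

theorem G_nonneg {a t r α β : ℝ} (hα : 0 < α) (hβ : 0 < β) (ht : a ≤ t) (hr : a ≤ r) :
    0 ≤ G a α β t r := by
  have := Gamma_pos_of_pos hα
  have := Gamma_pos_of_pos hβ
  refine mul_nonneg (by positivity) (intervalIntegral.integral_nonneg (le_min ht hr) ?_)
  intro s hs
  exact mul_nonneg (rpow_nonneg (by linarith [hs.2, min_le_left t r]) _)
    (rpow_nonneg (by linarith [hs.2, min_le_right t r]) _)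

theorem G_le {a b t r α β : ℝ} (hα0 : 0 < α) (hα1 : α ≤ 1) (hβ0 : 0 < β) (hβ1 : β ≤ 1)
    (hαβ : 1 < α + β) (ht : t ∈ Icc a b) (hr : r ∈ Icc a b) :
    G a α β t r ≤ (b - a) ^ (α + β - 1) / ((α + β - 1) * Gamma α * Gamma β) := by
  have := Gamma_pos_of_pos hα0
  have := Gamma_pos_of_pos hβ0
  have hm : a ≤ min t r := le_min ht.1 hr.1
  calc G a α β t r ≤ 1 / (Gamma α * Gamma β) * ((min t r - a) ^ (α + β - 1) / (α + β - 1)) := by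
        unfold G
        gcongr
        exact integral_rpow_mul_rpow_le hα1 hβ1 hαβ ht.1 hr.1
    _ ≤ 1 / (Gamma α * Gamma β) * ((b - a) ^ (α + β - 1) / (α + β - 1)) := by
        gcongr
        exact (min_le_left t r).trans ht.2
    _ = (b - a) ^ (α + β - 1) / ((α + β - 1) * Gamma α * Gamma β) := by
        field_simp

theorem abs_G_le {a b t r α β : ℝ} (hα0 : 0 < α) (hα1 : α ≤ 1) (hβ0 : 0 < β) (hβ1 : β ≤ 1)
    (hαβ : 1 < α + β) (ht : t ∈ Icc a b) (hr : r ∈ Icc a b) :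
    |G a α β t r| ≤ (b - a) ^ (α + β - 1) / ((α + β - 1) * Gamma α * Gamma β) := by
  rw [abs_of_nonneg (G_nonneg hα0 hβ0 ht.1 hr.1)]
  exact G_le hα0 hα1 hβ0 hβ1 hαβ ht hr

theorem stmt_8_general (a b α β lam : ℝ) (hα0 : 0 < α) (hα1 : α ≤ 1) (hβ0 : 0 < β) (hβ1 : β ≤ 1)
    (hs1 : 1 < α + β) (hab : a < b)
    (u : ℝ → ℝ) (hu : ContinuousOn u (Icc a b)) (hne : ∃ t ∈ Icc a b, u t ≠ 0)
    (heq : ∀ t ∈ Icc a b, u t = lam * ∫ r in a..b, G a α β t r * u r) :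
    (α + β - 1) * Real.Gamma α * Real.Gamma β / (b - a) ^ (α + β) ≤ |lam| := by
  have h := one_le_abs_mul_of_eq_mul_integral hab.le
    (fun t ht r hr => abs_G_le hα0 hα1 hβ0 hβ1 hs1 ht hr) hu hne heq
  have hba : 0 < b - a := sub_pos.2 hab
  have hpow : (b - a) ^ (α + β - 1) * (b - a) = (b - a) ^ (α + β) := by
    rw [← rpow_add_one hba.ne', sub_add_cancel]
  have hC : 0 < (α + β - 1) * Gamma α * Gamma β := by
    have := Gamma_pos_of_pos hα0
    have := Gamma_pos_of_pos hβ0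
    have : 0 < α + β - 1 := by linarith
    positivity
  rw [div_mul_eq_mul_div, hpow, mul_div_assoc', le_div_iff₀ hC, one_mul] at h
  rwa [div_le_iff₀ (rpow_pos_of_pos hba _)]

theorem stmt_8 (a b α β lam : ℝ) (hα0 : 0 < α) (hα1 : α ≤ 1) (hβ0 : 0 < β) (hβ1 : β ≤ 1)
    (hs1 : 1 < α + β) (hs2 : α + β ≤ 2) (hab : a < b)
    (u : ℝ → ℝ) (hu : ContinuousOn u (Icc a b)) (hne : ∃ t ∈ Icc a b, u t ≠ 0)
    (heq : ∀ t ∈ Icc a b, u t = lam * ∫ r in a..b, G a α β t r * u r) :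
    (α + β - 1) * Real.Gamma α * Real.Gamma β / (b - a) ^ (α + β) ≤ |lam| :=
  stmt_8_general a b α β lam hα0 hα1 hβ0 hβ1 hs1 hab u hu hne heq
end

section
/- Let 0 < α, β ≤ 1, a < b, and h : [a,b] → ℝ continuous. Then for every t ∈ [a,b], (1/(Γ(α)Γ(β))) ∫_a^t (t-s)^{β-1} (∫_s^b (r-s)^{α-1} h(r) dr) ds = ∫_a^b G(t,r) h(r) dr, where G(t,r) = (1/(Γ(α)Γ(β))) ∫_a^{min(t,r)} (t-s)^{β-1}(r-s)^{α-1} ds. -/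
/-! Both sides are the integral of `(t - s) ^ (β - 1) * (r - s) ^ (α - 1) * h r` over the region
`a < s ≤ t`, `s ≤ r ≤ b`, taken in the two possible orders. Fubini applies because the kernel is
integrable there: its `r`-section integrates to `(t - s) ^ (β - 1) * (b - s) ^ α / α`, which is
integrable in `s` since `β > 0`. -/

open Real MeasureTheory Set

section Triangle

variable {E : Type*} [NormedAddCommGroup E] [NormedSpace ℝ E]

theorem setIntegral_Ioc_indicator_Ici {a b s : ℝ} (has : a < s) (hsb : s ≤ b) (g : ℝ → E) :
    ∫ r in Ioc a b, (Ici s).indicator g r = ∫ r in s..b, g r := by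
  have hset : Ioc a b ∩ Ici s = Icc s b := by
    ext r
    simp only [mem_inter_iff, mem_Ioc, mem_Ici, mem_Icc]
    exact ⟨fun ⟨⟨_, hrb⟩, hsr⟩ => ⟨hsr, hrb⟩, fun ⟨hsr, hrb⟩ => ⟨⟨has.trans_le hsr, hrb⟩, hsr⟩⟩
  rw [setIntegral_indicator measurableSet_Ici, hset, integral_Icc_eq_integral_Ioc,
    intervalIntegral.integral_of_le hsb]

theorem intervalIntegral_integral_swap_triangle {a t b : ℝ} (hat : a ≤ t) (htb : t ≤ b)
    {f : ℝ → ℝ → E}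
    (hf : IntegrableOn (fun p : ℝ × ℝ => if p.1 ≤ p.2 then f p.1 p.2 else 0)
      (Ioc a t ×ˢ Ioc a b)) :
    ∫ s in a..t, ∫ r in s..b, f s r = ∫ r in a..b, ∫ s in a..min t r, f s r := by
  have hab := hat.trans htb
  calc ∫ s in a..t, ∫ r in s..b, f s r
      = ∫ s in a..t, ∫ r in a..b, (Ici s).indicator (f s) r := by
        refine intervalIntegral.integral_congr_ae (Filter.Eventually.of_forall fun s hs => ?_)
        rw [uIoc_of_le hat] at hs
        rw [intervalIntegral.integral_of_le hab,
          setIntegral_Ioc_indicator_Ici hs.1 (hs.2.trans htb)]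
    _ = ∫ r in a..b, ∫ s in a..t, (Iic r).indicator (f · r) s :=
        intervalIntegral_intervalIntegral_swap (by rwa [uIoc_of_le hat, uIoc_of_le hab])
    _ = ∫ r in a..b, ∫ s in a..min t r, f s r := by
        refine intervalIntegral.integral_congr_ae (Filter.Eventually.of_forall fun r hr => ?_)
        rw [uIoc_of_le hab] at hr
        rw [intervalIntegral.integral_of_le hat, setIntegral_indicator measurableSet_Iic,
          Ioc_inter_Iic, intervalIntegral.integral_of_le (le_min hat hr.1.le)]

end Triangle

theorem integrableOn_sub_const_rpow_Ioc {γ : ℝ} (hγ : -1 < γ) (s b : ℝ) :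
    IntegrableOn (fun r => (r - s) ^ γ) (Ioc s b) := by
  simpa using
    ((intervalIntegral.intervalIntegrable_rpow' (a := 0) (b := b - s) hγ).comp_sub_right s).1

theorem integrableOn_const_sub_rpow_Ioc {γ : ℝ} (hγ : -1 < γ) (a t : ℝ) :
    IntegrableOn (fun s => (t - s) ^ γ) (Ioc a t) := by
  simpa using
    ((intervalIntegral.intervalIntegrable_rpow' (a := t - a) (b := 0) hγ).comp_sub_left t).1

theorem integral_sub_const_rpow_sub_one {α : ℝ} (hα : 0 < α) (s b : ℝ) :
    ∫ r in s..b, (r - s) ^ (α - 1) = (b - s) ^ α / α := by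
  rw [intervalIntegral.integral_comp_sub_right (fun u => u ^ (α - 1)), sub_self,
    integral_rpow (Or.inl (by linarith)), sub_add_cancel, zero_rpow hα.ne', sub_zero]

theorem integrableOn_const_sub_rpow_mul_sub_rpow {a b t α β : ℝ} (hα : 0 < α) (hβ : 0 < β)
    (htb : t ≤ b) :
    IntegrableOn
      (fun p : ℝ × ℝ => if p.1 ≤ p.2 then (t - p.1) ^ (β - 1) * (p.2 - p.1) ^ (α - 1) else 0)
      (Ioc a t ×ˢ Ioc a b) := by
  set K : ℝ × ℝ → ℝ :=
    fun p => if p.1 ≤ p.2 then (t - p.1) ^ (β - 1) * (p.2 - p.1) ^ (α - 1) else 0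
  have hK : Measurable K :=
    Measurable.ite (measurableSet_le measurable_fst measurable_snd) (by fun_prop) measurable_const
  have hsection : ∀ s, (fun r => K (s, r)) =
      (Ici s).indicator (fun r => (t - s) ^ (β - 1) * (r - s) ^ (α - 1)) := fun s => rfl
  rw [IntegrableOn, Measure.volume_eq_prod, ← Measure.prod_restrict,
    integrable_prod_iff hK.aestronglyMeasurable]
  constructor
  · filter_upwards [ae_restrict_mem measurableSet_Ioc] with s hs
    rw [hsection, integrable_indicator_iff measurableSet_Ici, IntegrableOn,
      Measure.restrict_restrict measurableSet_Ici]
    refine ((integrableOn_Icc_iff_integrableOn_Ioc).2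
      ((integrableOn_sub_const_rpow_Ioc (by linarith) s b).const_mul _)).mono_set ?_
    exact fun r ⟨hsr, hr⟩ => ⟨hsr, hr.2⟩
  · have hint : IntegrableOn (fun s => (t - s) ^ (β - 1) * ((b - s) ^ α / α)) (Ioc a t) :=
      (integrableOn_const_sub_rpow_Ioc (by linarith) a t).mul_continuousOn_of_subset
        (((continuousOn_const.sub continuousOn_id).rpow_const fun _ _ => Or.inr hα.le).div_const α)
        measurableSet_Ioc isCompact_Icc Ioc_subset_Icc_self
    refine hint.congr_fun (fun s ⟨has, hst⟩ => ?_) measurableSet_Ioc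
    have hK_nonneg : ∀ r, 0 ≤ K (s, r) := fun r => by
      simp only [K]
      split_ifs with hsr
      · exact mul_nonneg (rpow_nonneg (sub_nonneg.2 hst) _) (rpow_nonneg (sub_nonneg.2 hsr) _)
      · exact le_rfl
    simp_rw [Real.norm_of_nonneg (hK_nonneg _)]
    rw [hsection, setIntegral_Ioc_indicator_Ici has (hst.trans htb),
      intervalIntegral.integral_const_mul, integral_sub_const_rpow_sub_one hα]

theorem stmt_9_general (a b α β : ℝ) (hα0 : 0 < α) (hβ0 : 0 < β)
    (h : ℝ → ℝ) (hh : ContinuousOn h (Icc a b)) :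
    ∀ t ∈ Icc a b,
      (1 / (Real.Gamma α * Real.Gamma β)) *
          ∫ s in a..t, (t - s) ^ (β - 1) * ∫ r in s..b, (r - s) ^ (α - 1) * h r =
        ∫ r in a..b, G a α β t r * h r := by
  rintro t ⟨hat, htb⟩
  have hf : IntegrableOn
      (fun p : ℝ × ℝ => if p.1 ≤ p.2 then (t - p.1) ^ (β - 1) * ((p.2 - p.1) ^ (α - 1) * h p.2)
        else 0) (Ioc a t ×ˢ Ioc a b) := by
    have hIoc : MeasurableSet (Ioc a t ×ˢ Ioc a b) := measurableSet_Ioc.prod measurableSet_Ioc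
    refine ((integrableOn_const_sub_rpow_mul_sub_rpow hα0 hβ0 htb).mul_continuousOn_of_subset
      (hh.comp continuousOn_snd fun p hp => hp.2) hIoc (isCompact_Icc.prod isCompact_Icc)
      (prod_mono Ioc_subset_Icc_self Ioc_subset_Icc_self)).congr_fun (fun p _ => ?_) hIoc
    simp only [Function.comp_apply, ite_mul, zero_mul, mul_assoc]
  calc (1 / (Real.Gamma α * Real.Gamma β)) *
        ∫ s in a..t, (t - s) ^ (β - 1) * ∫ r in s..b, (r - s) ^ (α - 1) * h r
      = (1 / (Real.Gamma α * Real.Gamma β)) *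
          ∫ s in a..t, ∫ r in s..b, (t - s) ^ (β - 1) * ((r - s) ^ (α - 1) * h r) := by
        simp_rw [intervalIntegral.integral_const_mul]
    _ = (1 / (Real.Gamma α * Real.Gamma β)) *
          ∫ r in a..b, ∫ s in a..min t r, (t - s) ^ (β - 1) * ((r - s) ^ (α - 1) * h r) := by
        rw [intervalIntegral_integral_swap_triangle hat htb hf]
    _ = ∫ r in a..b, G a α β t r * h r := by
        rw [← intervalIntegral.integral_const_mul]
        congr 1 with r
        simp_rw [G, mul_assoc, ← intervalIntegral.integral_mul_const, mul_assoc]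

theorem stmt_9 (a b α β : ℝ) (hα0 : 0 < α) (hα1 : α ≤ 1) (hβ0 : 0 < β) (hβ1 : β ≤ 1)
    (hab : a < b) (h : ℝ → ℝ) (hh : ContinuousOn h (Icc a b)) :
    ∀ t ∈ Icc a b,
      (1 / (Real.Gamma α * Real.Gamma β)) *
          ∫ s in a..t, (t - s) ^ (β - 1) * ∫ r in s..b, (r - s) ^ (α - 1) * h r =
        ∫ r in a..b, G a α β t r * h r :=
  stmt_9_general a b α β hα0 hβ0 h hh
end
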